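/- Let G and H be finite graphs on the same number of vertices such that the C_1 colors of all vertices of G are pairwise distinct and S_1(G) = S_1(H) as sets. If G and H are not isomorphic, then S_2(G) ≠ S_2(H). -/

import Mathlib

/-!
Since `C₁` is injective on `G`, `|V| = |W|` and `S₁(G) = S₁(H)`, `C₁` is injective on `H` as
well, and matching `C₁` colors gives a bijection `e : V ≃ W`. A round-`r+1` color determines the
round-`r` color it refines, so `S₂(G) = S₂(H)` would force `e` to preserve `C₂` colors. When `C₁`
is injective, `y` is adjacent to `x` exactly when `C₁(y)` occurs in `C₂(x)`; hence `e` would be an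
isomorphism.
-/

/-- Codomain of the round-`r` color refinement coloring. -/
def ColorType : ℕ → Type
  | 0 => ℕ
  | r + 1 => Multiset (ColorType r)

/-- The color refinement colorings: `C 0 x = deg x` and `C (r+1) x` is the
multiset of round-`r` colors of the neighbors of `x`. -/
def CR {V : Type*} [Fintype V] (G : SimpleGraph V) [DecidableRel G.Adj] :
    (r : ℕ) → V → ColorType r
  | 0, x => G.degree x
  | r + 1, x => (G.neighborFinset x).val.map (CR G r)

def ColorType.coarsen : (r : ℕ) → ColorType (r + 1) → ColorType r
  | 0, c => Multiset.card (α := ℕ) c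
  | r + 1, c => Multiset.map (coarsen r) c

theorem Function.Injective.injective_of_range_eq {α V W : Type*} [Fintype V] [Fintype W]
    {f : V → α} {g : W → α} (hf : Function.Injective f) (hrange : Set.range f = Set.range g)
    (hcard : Fintype.card V = Fintype.card W) : Function.Injective g := by
  have hcard_range : Nat.card W = Nat.card (Set.range g) := by
    rw [← hrange, Nat.card_range_of_injective hf, Nat.card_eq_fintype_card,
      Nat.card_eq_fintype_card, hcard]
  exact Set.rangeFactorization_injective.1
    ((Nat.bijective_iff_surjective_and_card _).2
      ⟨Set.rangeFactorization_surjective, hcard_range⟩).injective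

theorem exists_equiv_comp_eq_of_range_eq {α V W : Type*} {f : V → α} {g : W → α}
    (hf : Function.Injective f) (hg : Function.Injective g) (hrange : Set.range f = Set.range g) :
    ∃ e : V ≃ W, ∀ v, g (e v) = f v :=
  ⟨(Equiv.ofInjective f hf).trans ((Equiv.setCongr hrange).trans (Equiv.ofInjective g hg).symm),
    fun v => Equiv.apply_ofInjective_symm hg ⟨f v, hrange ▸ Set.mem_range_self v⟩⟩

section ColorRefinement

variable {V : Type*} [Fintype V] (G : SimpleGraph V) [DecidableRel G.Adj]

theorem CR_succ_apply (r : ℕ) (x : V) :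
    CR G (r + 1) x = ((G.neighborFinset x).val.map (CR G r) : Multiset (ColorType r)) :=
  rfl

theorem coarsen_CR_succ (r : ℕ) (x : V) : ColorType.coarsen r (CR G (r + 1) x) = CR G r x := by
  induction r generalizing x with
  | zero => exact (Multiset.card_map _ _).trans (G.card_neighborFinset_eq_degree x)
  | succ r ih =>
    show Multiset.map _ (Multiset.map _ _) = _
    rw [Multiset.map_map]
    exact Multiset.map_congr rfl fun y _ => ih y

theorem CR_mem_CR_succ_iff {r : ℕ} (hinj : Function.Injective (CR G r)) (x y : V) :
    CR G r y ∈ (show Multiset (ColorType r) from CR G (r + 1) x) ↔ G.Adj x y := by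
  rw [CR_succ_apply, Multiset.mem_map]
  constructor
  · rintro ⟨z, hz, hzy⟩
    rwa [← hinj hzy, ← SimpleGraph.mem_neighborFinset]
  · exact fun h => ⟨y, (G.mem_neighborFinset x y).2 h, rfl⟩

variable {W : Type*} [Fintype W] {H : SimpleGraph W} [DecidableRel H.Adj]

theorem CR_succ_eq_of_mem_range {r : ℕ} (hH : Function.Injective (CR H r)) {e : V → W}
    (he : ∀ v, CR H r (e v) = CR G r v) {v : V} (hv : CR G (r + 1) v ∈ Set.range (CR H (r + 1))) :
    CR H (r + 1) (e v) = CR G (r + 1) v := by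
  obtain ⟨w, hw⟩ := hv
  have hwe : w = e v := hH <| by rw [← coarsen_CR_succ, hw, coarsen_CR_succ, he]
  rwa [← hwe]

theorem adj_iff_adj_of_CR_succ_eq {r : ℕ} (hG : Function.Injective (CR G r))
    (hH : Function.Injective (CR H r)) {e : V → W} (he : ∀ v, CR H (r + 1) (e v) = CR G (r + 1) v)
    (u v : V) : H.Adj (e u) (e v) ↔ G.Adj u v := by
  have he' : CR H r (e v) = CR G r v := by rw [← coarsen_CR_succ, he, coarsen_CR_succ]
  rw [← CR_mem_CR_succ_iff G hG, ← CR_mem_CR_succ_iff H hH, he', he]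

end ColorRefinement

/-- Let `G` and `H` be finite graphs on the same number of vertices such that
the `C₁` colors of all vertices of `G` are pairwise distinct and
`S₁(G) = S₁(H)` as sets. If `G` and `H` are not isomorphic, then
`S₂(G) ≠ S₂(H)`. -/
theorem S2_distinguishes {V W : Type*} [Fintype V] [Fintype W]
    (G : SimpleGraph V) (H : SimpleGraph W)
    [DecidableRel G.Adj] [DecidableRel H.Adj]
    (hcard : Fintype.card V = Fintype.card W)
    (hinj : Function.Injective (CR G 1))
    (hS1 : Set.range (CR G 1) = Set.range (CR H 1))
    (hniso : ¬ Nonempty (G ≃g H)) :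
    Set.range (CR G 2) ≠ Set.range (CR H 2) := by
  intro hS2
  have hH1 : Function.Injective (CR H 1) := hinj.injective_of_range_eq hS1 hcard
  obtain ⟨e, he⟩ := exists_equiv_comp_eq_of_range_eq hinj hH1 hS1
  have he2 (v : V) : CR H 2 (e v) = CR G 2 v :=
    CR_succ_eq_of_mem_range G hH1 he (hS2 ▸ Set.mem_range_self v)
  exact hniso ⟨⟨e, adj_iff_adj_of_CR_succ_eq G hinj hH1 he2 _ _⟩⟩
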